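/- Gradient formula for the hidden state: let C = (I - U T⁻¹ Uᵀ) h and let L be a differentiable scalar function of C. Setting C̃ = (Tᵀ)⁻¹ Uᵀ (∂L/∂C), the gradient of L with respect to h equals ∂L/∂h = ∂L/∂C - U C̃. -/

import Mathlib

/-!
`C` depends linearly on `h`, `C = W h` with `W = I - U T⁻¹ Uᵀ`, so by the chain rule the gradient
with respect to `h` is `Wᵀ (∂L/∂C)`. Since `Wᵀ = I - U (Tᵀ)⁻¹ Uᵀ`, this is `∂L/∂C - U C̃`.
-/

open Matrix

/-- `striu A + (1/2) diag A`: strictly upper triangular part plus half the diagonal. -/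
noncomputable def wyT {m : ℕ} (A : Matrix (Fin m) (Fin m) ℝ) : Matrix (Fin m) (Fin m) ℝ :=
  Matrix.of fun i j => if (i : ℕ) < (j : ℕ) then A i j else if i = j then A i i / 2 else 0

section Gradient

variable {𝕜 E F : Type*} [RCLike 𝕜]
  [NormedAddCommGroup E] [InnerProductSpace 𝕜 E] [CompleteSpace E]
  [NormedAddCommGroup F] [InnerProductSpace 𝕜 F] [CompleteSpace F]

theorem HasGradientAt.comp_continuousLinearMap {f : F → 𝕜} {f' : F} {x : E} (A : E →L[𝕜] F)
    (hf : HasGradientAt f f' (A x)) :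
    HasGradientAt (f ∘ A) (A.adjoint f') x := by
  have hdual : InnerProductSpace.toDual 𝕜 E (A.adjoint f') =
      (InnerProductSpace.toDual 𝕜 F f').comp A := by
    ext v
    simp [ContinuousLinearMap.adjoint_inner_left]
  rw [hasGradientAt_iff_hasFDerivAt, hdual]
  exact (hasGradientAt_iff_hasFDerivAt.mp hf).comp x A.hasFDerivAt

end Gradient

theorem Matrix.gradient_comp_mulVec {𝕜 m n : Type*} [RCLike 𝕜] [Fintype m] [Fintype n]
    [DecidableEq m] [DecidableEq n] (W : Matrix m n 𝕜) {L : EuclideanSpace 𝕜 m → 𝕜}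
    {x : EuclideanSpace 𝕜 n}
    (hL : DifferentiableAt 𝕜 L (WithLp.toLp 2 (W *ᵥ x))) :
    gradient (fun y : EuclideanSpace 𝕜 n => L (WithLp.toLp 2 (W *ᵥ y))) x =
      WithLp.toLp 2 (Wᴴ *ᵥ (gradient L (WithLp.toLp 2 (W *ᵥ x))).ofLp) := by
  have hgrad := hL.hasGradientAt.comp_continuousLinearMap (toEuclideanLin W).toContinuousLinearMap
  rw [← LinearMap.adjoint_toContinuousLinearMap, ← toEuclideanLin_conjTranspose_eq_adjoint] at hgrad
  exact hgrad.gradient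

theorem Matrix.transpose_one_sub_mul_mul_transpose {R m n : Type*} [CommRing R] [Fintype m]
    [DecidableEq n] (U : Matrix n m R) (S : Matrix m m R) :
    (1 - U * S * Uᵀ)ᵀ = 1 - U * Sᵀ * Uᵀ := by
  simp only [transpose_sub, transpose_one, transpose_mul, transpose_transpose, Matrix.mul_assoc]

theorem gradient_hidden_state_general {n m : ℕ}
    (U : Matrix (Fin n) (Fin m) ℝ)
    (L : EuclideanSpace ℝ (Fin n) → ℝ) (hL : Differentiable ℝ L)
    (h : EuclideanSpace ℝ (Fin n)) :
    let W := (1 : Matrix (Fin n) (Fin n) ℝ) - U * (wyT (U.transpose * U))⁻¹ * U.transpose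
    let C : EuclideanSpace ℝ (Fin n) := WithLp.toLp 2 (W.mulVec h)
    let g := gradient L C
    let Ctilde := ((wyT (U.transpose * U)).transpose)⁻¹.mulVec (U.transpose.mulVec g)
    let UC : EuclideanSpace ℝ (Fin n) := WithLp.toLp 2 (U.mulVec Ctilde)
    gradient (fun x : EuclideanSpace ℝ (Fin n) =>
        L ((WithLp.toLp 2 (W.mulVec x) : EuclideanSpace ℝ (Fin n)))) h = g - UC := by
  intro W C g Ctilde UC
  rw [gradient_comp_mulVec W (hL _), conjTranspose_eq_transpose_of_trivial,
    transpose_one_sub_mul_mul_transpose, transpose_nonsing_inv, sub_mulVec, one_mulVec,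
    ← mulVec_mulVec, ← mulVec_mulVec, WithLp.toLp_sub]

/-- gradient w.r.t. the hidden state.  With `C = (I - U T⁻¹ Uᵀ) h`,
`C̃ = (Tᵀ)⁻¹ Uᵀ (∂L/∂C)`, we have `∂L/∂h = ∂L/∂C - U C̃`. -/
theorem gradient_hidden_state {n m : ℕ} (hm : m ≤ n - 1)
    (U : Matrix (Fin n) (Fin m) ℝ)
    (hstruct : ∀ j : Fin m, (fun i => U i j) ≠ 0 ∧
      ∀ i : Fin n, (i : ℕ) < (j : ℕ) → U i j = 0)
    (hT : IsUnit (wyT (U.transpose * U)))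
    (L : EuclideanSpace ℝ (Fin n) → ℝ) (hL : Differentiable ℝ L)
    (h : EuclideanSpace ℝ (Fin n)) :
    let W := (1 : Matrix (Fin n) (Fin n) ℝ) - U * (wyT (U.transpose * U))⁻¹ * U.transpose
    let C : EuclideanSpace ℝ (Fin n) := WithLp.toLp 2 (W.mulVec h)
    let g := gradient L C
    let Ctilde := ((wyT (U.transpose * U)).transpose)⁻¹.mulVec (U.transpose.mulVec g)
    let UC : EuclideanSpace ℝ (Fin n) := WithLp.toLp 2 (U.mulVec Ctilde)
    gradient (fun x : EuclideanSpace ℝ (Fin n) =>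
        L ((WithLp.toLp 2 (W.mulVec x) : EuclideanSpace ℝ (Fin n)))) h = g - UC :=
  gradient_hidden_state_general U L hL h
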